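/- arXiv:math/0610077 — 2 statements merged into one kernel-verified Lean document; each statement's English description precedes it below -/
import Mathlib

section
/- Let φ(z) = (Az+B)/(Cz+D) with AD−BC ≠ 0 be a linear-fractional map whose denominator does not vanish on the closed unit disk, which maps 𝔻 into 𝔻 but not onto 𝔻, and suppose φ(ζ) = η for distinct points ζ, η ∈ ∂𝔻. Let ψ(z) = (A'z+B')/(C'z+D') with A'D'−B'C' ≠ 0 be a linear-fractional map whose denominator does not vanish on the closed unit disk, mapping 𝔻 into 𝔻, with ψ(ζ) = η, ψ'(ζ) = φ'(ζ), and ψ(𝔻) a proper subset of φ(𝔻). Then there exists a ∈ ℂ with Re a > 0 such that ψ(z) = φ(ρ_{ζ,a}(z)) for every z ∈ 𝔻. -/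
/-- The parabolic map `ρ_{γ,a}(z) = γ((2−a)z + aγ)/((2+a)γ − az)`. -/
noncomputable def rho (γ a z : ℂ) : ℂ := γ * ((2 - a) * z + a * γ) / ((2 + a) * γ - a * z)

/-!
Both maps are Möbius transformations, so `φ⁻¹ ∘ ψ` is one too; it fixes `ζ` with
derivative `1` there, and such a map is `ρ_{ζ,a}` for some `a`. Under the Cayley map
`ρ_{ζ,a}` is translation by `a` of the right half-plane. If `Re a < 0`, it pushes a point
of the disk onto the circle, and then `ψ(𝔻) ⊆ φ(𝔻)` contradicts injectivity of `φ` on the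
closed disk; if `Re a = 0`, it is an automorphism of the disk and `ψ(𝔻) = φ(𝔻)`.
-/

open Complex Matrix Metric Set

noncomputable def mobius (M : Matrix (Fin 2) (Fin 2) ℂ) (z : ℂ) : ℂ :=
  (M 0 0 * z + M 0 1) / (M 1 0 * z + M 1 1)

section Mobius

variable (M N : Matrix (Fin 2) (Fin 2) ℂ)

lemma mobius_smul {c : ℂ} (hc : c ≠ 0) (z : ℂ) : mobius (c • M) z = mobius M z := by
  simp only [mobius, Matrix.smul_apply, smul_eq_mul, mul_assoc, ← mul_add]
  exact mul_div_mul_left _ _ hc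

lemma mobius_mul {z : ℂ} (hz : N 1 0 * z + N 1 1 ≠ 0) :
    mobius (M * N) z = mobius M (mobius N z) := by
  have clear_den : ∀ x y : ℂ, x * mobius N z + y
      = (x * (N 0 0 * z + N 0 1) + y * (N 1 0 * z + N 1 1)) / (N 1 0 * z + N 1 1) :=
    fun x y => by rw [mobius, mul_div_assoc', div_add' _ _ _ hz]
  conv_rhs => rw [mobius, clear_den, clear_den, div_div_div_cancel_right₀ hz]
  simp only [mobius, Matrix.mul_apply, Fin.sum_univ_two]
  congr 1 <;> ring

lemma hasDerivAt_mobius {z : ℂ} (hz : M 1 0 * z + M 1 1 ≠ 0) :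
    HasDerivAt (mobius M) (M.det / (M 1 0 * z + M 1 1) ^ 2) z := by
  have hnum : HasDerivAt (fun w => M 0 0 * w + M 0 1) (M 0 0) z := by
    simpa using ((hasDerivAt_id z).const_mul (M 0 0)).add_const (M 0 1)
  have hden : HasDerivAt (fun w => M 1 0 * w + M 1 1) (M 1 0) z := by
    simpa using ((hasDerivAt_id z).const_mul (M 1 0)).add_const (M 1 1)
  refine (hnum.div hden hz).congr_deriv ?_
  rw [det_fin_two]
  ring

lemma injOn_mobius (hM : M.det ≠ 0) : InjOn (mobius M) {z | M 1 0 * z + M 1 1 ≠ 0} := by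
  intro u hu v hv huv
  rw [mobius, mobius, div_eq_div_iff hu hv] at huv
  have : M.det * (u - v) = 0 := by
    rw [det_fin_two]
    linear_combination huv
  exact sub_eq_zero.1 ((mul_eq_zero.1 this).resolve_left hM)

end Mobius

noncomputable def rhoMatrix (ζ a : ℂ) : Matrix (Fin 2) (Fin 2) ℂ :=
  !![(2 - a) * ζ, a * ζ ^ 2; -a, (2 + a) * ζ]

lemma mobius_rhoMatrix (ζ a z : ℂ) : mobius (rhoMatrix ζ a) z = rho ζ a z := by
  simp only [mobius, rhoMatrix, rho, of_apply, cons_val', cons_val_zero, cons_val_one,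
    empty_val', cons_val_fin_one]
  congr 1 <;> ring

lemma eq_smul_rhoMatrix {p q r t ζ : ℂ} (hζ : ζ ≠ 0) (hs : r * ζ + t ≠ 0)
    (hfix : p * ζ + q = ζ * (r * ζ + t)) (hdet : p * t - q * r = (r * ζ + t) ^ 2) :
    !![p, q; r, t] = ((r * ζ + t) / (2 * ζ)) • rhoMatrix ζ (-(2 * ζ * r) / (r * ζ + t)) := by
  have hp : p = t + 2 * r * ζ := by
    refine mul_right_cancel₀ hs ?_
    linear_combination hdet + r * hfix
  have hq : q = -r * ζ ^ 2 := by linear_combination hfix - ζ * hp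
  ext i j
  fin_cases i <;> fin_cases j <;> simp [rhoMatrix, hp, hq] <;> field_simp <;> ring

theorem exists_smul_mul_rhoMatrix {A B C D A' B' C' D' ζ : ℂ} (hζ : ζ ≠ 0)
    (hdet : A * D - B * C ≠ 0) (hCD : C * ζ + D ≠ 0) (hCD' : C' * ζ + D' ≠ 0)
    (hval : (A' * ζ + B') / (C' * ζ + D') = (A * ζ + B) / (C * ζ + D))
    (hder : (A' * D' - B' * C') / (C' * ζ + D') ^ 2 = (A * D - B * C) / (C * ζ + D) ^ 2) :
    ∃ a c : ℂ, c ≠ 0 ∧ !![A', B'; C', D'] = c • (!![A, B; C, D] * rhoMatrix ζ a) := by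
  rw [div_eq_div_iff hCD' hCD] at hval
  rw [div_eq_div_iff (pow_ne_zero 2 hCD') (pow_ne_zero 2 hCD)] at hder
  -- `adjugate M * M'` is the matrix of `φ⁻¹ ∘ ψ`; `hfix` and `hdetN` say that `(ζ, 1)` is an
  -- eigenvector for its double eigenvalue `s`.
  set s := (A * C' - C * A') * ζ + (A * D' - C * B')
  have hs_mul : s * (C * ζ + D) = (A * D - B * C) * (C' * ζ + D') := by
    linear_combination -C * hval
  have hs : s ≠ 0 := by
    intro h
    rw [h, zero_mul] at hs_mul
    exact mul_ne_zero hdet hCD' hs_mul.symm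
  have hfix : (D * A' - B * C') * ζ + (D * B' - B * D') = ζ * s := by
    linear_combination hval
  have hdetN : (D * A' - B * C') * (A * D' - C * B') - (D * B' - B * D') * (A * C' - C * A')
      = s ^ 2 := by
    refine mul_right_cancel₀ (pow_ne_zero 2 hCD) ?_
    linear_combination (A * D - B * C) * hder
      - (s * (C * ζ + D) + (A * D - B * C) * (C' * ζ + D')) * hs_mul
  have hN : adjugate !![A, B; C, D] * !![A', B'; C', D']
      = (s / (2 * ζ)) • rhoMatrix ζ (-(2 * ζ * (A * C' - C * A')) / s) := by
    rw [adjugate_fin_two_of, mul_fin_two, ← eq_smul_rhoMatrix hζ hs hfix hdetN]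
    ext i j
    fin_cases i <;> fin_cases j <;> simp <;> ring
  refine ⟨-(2 * ζ * (A * C' - C * A')) / s, (A * D - B * C)⁻¹ * (s / (2 * ζ)),
    by simp [hdet, hs, hζ], ?_⟩
  rw [mul_smul, ← mul_smul_comm, ← hN, ← Matrix.mul_assoc, mul_adjugate, det_fin_two_of,
    smul_mul, Matrix.one_mul, smul_smul, inv_mul_cancel₀ hdet, one_smul]

lemma normSq_add_one_eq (w : ℂ) : normSq (w + 1) = normSq (w - 1) + 4 * w.re := by
  simp only [normSq_apply, add_re, sub_re, add_im, sub_im, one_re, one_im]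
  ring

lemma norm_sub_one_lt_norm_add_one_iff (w : ℂ) : ‖w - 1‖ < ‖w + 1‖ ↔ 0 < w.re := by
  rw [← sq_lt_sq₀ (norm_nonneg _) (norm_nonneg _), Complex.sq_norm, Complex.sq_norm,
    normSq_add_one_eq]
  constructor <;> intro h <;> linarith

lemma norm_sub_one_eq_norm_add_one_iff (w : ℂ) : ‖w - 1‖ = ‖w + 1‖ ↔ w.re = 0 := by
  rw [← sq_eq_sq₀ (norm_nonneg _) (norm_nonneg _), Complex.sq_norm, Complex.sq_norm,
    normSq_add_one_eq]
  constructor <;> intro h <;> linarith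

/-! The relation `z * (w + 1) = ζ * (w - 1)` says that `w = (ζ + z) / (ζ - z)` is the image
of `z` under the Cayley map of `𝔻` onto the right half-plane sending `ζ` to `∞`. -/

section Cayley

variable {ζ z w : ℂ}

lemma add_one_ne_zero_of_cayley (hζ : ζ ≠ 0) (h : z * (w + 1) = ζ * (w - 1)) :
    w + 1 ≠ 0 := by
  intro hw
  exact hζ (by linear_combination h / 2 - (z - ζ) / 2 * hw)

lemma exists_cayley (hz : z ≠ ζ) : ∃ w, z * (w + 1) = ζ * (w - 1) :=
  ⟨(ζ + z) / (ζ - z), by field_simp [sub_ne_zero.2 hz.symm]; ring⟩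

lemma norm_mul_norm_add_one_of_cayley (hζ : ‖ζ‖ = 1) (h : z * (w + 1) = ζ * (w - 1)) :
    ‖z‖ * ‖w + 1‖ = ‖w - 1‖ := by
  simpa [hζ] using congrArg norm h

lemma norm_lt_one_iff_of_cayley (hζ : ‖ζ‖ = 1) (h : z * (w + 1) = ζ * (w - 1)) :
    ‖z‖ < 1 ↔ 0 < w.re := by
  have hw := norm_pos_iff.2 (add_one_ne_zero_of_cayley (norm_ne_zero_iff.1 (by simp [hζ])) h)
  rw [← norm_sub_one_lt_norm_add_one_iff, ← norm_mul_norm_add_one_of_cayley hζ h,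
    mul_lt_iff_lt_one_left hw]

lemma norm_eq_one_iff_of_cayley (hζ : ‖ζ‖ = 1) (h : z * (w + 1) = ζ * (w - 1)) :
    ‖z‖ = 1 ↔ w.re = 0 := by
  have hw := norm_ne_zero_iff.2 (add_one_ne_zero_of_cayley (norm_ne_zero_iff.1 (by simp [hζ])) h)
  rw [← norm_sub_one_eq_norm_add_one_iff, ← norm_mul_norm_add_one_of_cayley hζ h,
    mul_eq_right₀ hw]

lemma rho_of_cayley (a : ℂ) (hζ : ζ ≠ 0) (h : z * (w + 1) = ζ * (w - 1))
    (ha : w + a + 1 ≠ 0) :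
    (2 + a) * ζ - a * z ≠ 0 ∧ rho ζ a z * (w + a + 1) = ζ * (w + a - 1) := by
  have hζz : (ζ - z) * (w + 1) = 2 * ζ := by linear_combination -h
  have hζz' : ζ - z ≠ 0 := left_ne_zero_of_mul (hζz ▸ mul_ne_zero two_ne_zero hζ)
  have hden : (2 + a) * ζ - a * z = (ζ - z) * (w + a + 1) := by linear_combination -hζz
  have hnum : ζ * ((2 - a) * z + a * ζ) = ζ * (ζ - z) * (w + a - 1) := by
    linear_combination -ζ * hζz
  refine ⟨hden ▸ mul_ne_zero hζz' ha, ?_⟩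
  rw [rho, hden, hnum]
  field_simp

end Cayley

section Parabolic

variable {ζ a z : ℂ}

lemma rho_den_ne_zero_and_norm_lt_one (hζ : ‖ζ‖ = 1) (ha : 0 ≤ a.re) (hz : ‖z‖ < 1) :
    (2 + a) * ζ - a * z ≠ 0 ∧ ‖rho ζ a z‖ < 1 := by
  have hζ0 : ζ ≠ 0 := norm_ne_zero_iff.1 (by simp [hζ])
  obtain ⟨w, hw⟩ := exists_cayley (z := z) (ζ := ζ) (by rintro rfl; linarith)
  have hre : 0 < (w + a).re := by
    rw [add_re]; linarith [(norm_lt_one_iff_of_cayley hζ hw).1 hz]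
  have hne : w + a + 1 ≠ 0 := ne_zero_of_re_pos (by rw [add_re (w + a), one_re]; linarith)
  obtain ⟨hden, hrho⟩ := rho_of_cayley a hζ0 hw hne
  exact ⟨hden, (norm_lt_one_iff_of_cayley hζ hrho).2 hre⟩

lemma exists_norm_rho_eq_one (hζ : ‖ζ‖ = 1) (ha : a.re < 0) :
    ∃ z, ‖z‖ < 1 ∧ (2 + a) * ζ - a * z ≠ 0 ∧ ‖rho ζ a z‖ = 1 := by
  have hζ0 : ζ ≠ 0 := norm_ne_zero_iff.1 (by simp [hζ])
  -- The point of the half-plane `-Re a` is translated by `a` onto the imaginary axis.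
  set w : ℂ := -a.re
  have hw : w + 1 ≠ 0 := ne_zero_of_re_pos (by simp [w]; linarith)
  have hcay : ζ * (w - 1) / (w + 1) * (w + 1) = ζ * (w - 1) := div_mul_cancel₀ _ hw
  have hne : w + a + 1 ≠ 0 := ne_zero_of_re_pos (by simp [w])
  obtain ⟨hden, hrho⟩ := rho_of_cayley a hζ0 hcay hne
  refine ⟨_, (norm_lt_one_iff_of_cayley hζ hcay).2 (by simpa [w]), hden,
    (norm_eq_one_iff_of_cayley hζ hrho).2 (by simp [w])⟩

lemma exists_rho_eq (hζ : ‖ζ‖ = 1) (ha : a.re = 0) (hz : ‖z‖ < 1) :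
    ∃ u, ‖u‖ < 1 ∧ rho ζ a u = z := by
  have hζ0 : ζ ≠ 0 := norm_ne_zero_iff.1 (by simp [hζ])
  refine ⟨rho ζ (-a) z, (rho_den_ne_zero_and_norm_lt_one hζ (by simp [ha]) hz).2, ?_⟩
  obtain ⟨w, hw⟩ := exists_cayley (z := z) (ζ := ζ) (by rintro rfl; simp [hζ] at hz)
  have hre : 0 < w.re := (norm_lt_one_iff_of_cayley hζ hw).1 hz
  have hw1 := add_one_ne_zero_of_cayley hζ0 hw
  obtain ⟨-, hu⟩ := rho_of_cayley (-a) hζ0 hw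
    (ne_zero_of_re_pos (by simp only [add_re, neg_re, one_re, ha]; linarith))
  obtain ⟨-, hz'⟩ := rho_of_cayley a hζ0 hu (by rwa [neg_add_cancel_right])
  rw [neg_add_cancel_right] at hz'
  exact mul_right_cancel₀ hw1 (hz'.trans hw.symm)

end Parabolic

section Composition

variable {φ ψ : ℂ → ℂ} {ζ a : ℂ}

lemma re_nonneg_of_eq_comp_rho (hζ : ‖ζ‖ = 1) (hinj : InjOn φ (closedBall 0 1))
    (hcomp : ∀ z, (2 + a) * ζ - a * z ≠ 0 → ψ z = φ (rho ζ a z))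
    (hsub : ψ '' ball 0 1 ⊆ φ '' ball 0 1) : 0 ≤ a.re := by
  by_contra! ha
  obtain ⟨z, hz, hden, hnorm⟩ := exists_norm_rho_eq_one hζ ha
  obtain ⟨v, hv, hφv⟩ := hsub ⟨z, mem_ball_zero_iff.2 hz, rfl⟩
  have hv_eq : v = rho ζ a z := hinj (ball_subset_closedBall hv)
    (mem_closedBall_zero_iff.2 hnorm.le) (hφv.trans (hcomp z hden))
  exact (mem_ball_zero_iff.1 hv).ne (hv_eq ▸ hnorm)

lemma image_ball_subset_of_eq_comp_rho (hζ : ‖ζ‖ = 1) (ha : a.re = 0)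
    (hcomp : ∀ z, (2 + a) * ζ - a * z ≠ 0 → ψ z = φ (rho ζ a z)) :
    φ '' ball 0 1 ⊆ ψ '' ball 0 1 := by
  rintro _ ⟨z, hz, rfl⟩
  obtain ⟨u, hu, rfl⟩ := exists_rho_eq hζ ha (mem_ball_zero_iff.1 hz)
  exact ⟨u, mem_ball_zero_iff.2 hu, hcomp u (rho_den_ne_zero_and_norm_lt_one hζ ha.ge hu).1⟩

end Composition

theorem stmt_4_general (A B C D A' B' C' D' : ℂ)
    (hdet : A * D - B * C ≠ 0)
    (φ ψ : ℂ → ℂ)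
    (hφ : ∀ z, φ z = (A * z + B) / (C * z + D))
    (hψ : ∀ z, ψ z = (A' * z + B') / (C' * z + D'))
    (hden : ∀ z : ℂ, ‖z‖ ≤ 1 → C * z + D ≠ 0)
    (hden' : ∀ z : ℂ, ‖z‖ ≤ 1 → C' * z + D' ≠ 0)
    (ζ η : ℂ) (hζ : ‖ζ‖ = 1)
    (hφζ : φ ζ = η) (hψζ : ψ ζ = η) (hder : deriv ψ ζ = deriv φ ζ)
    (hsub : ψ '' Metric.ball 0 1 ⊂ φ '' Metric.ball 0 1) :
    ∃ a : ℂ, 0 < a.re ∧ ∀ z ∈ Metric.ball (0 : ℂ) 1, ψ z = φ (rho ζ a z) := by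
  have hφM : φ = mobius !![A, B; C, D] := funext fun z => by simp [hφ, mobius]
  have hψM : ψ = mobius !![A', B'; C', D'] := funext fun z => by simp [hψ, mobius]
  have hCD := hden ζ hζ.le
  have hCD' := hden' ζ hζ.le
  rw [hφM, hψM, (hasDerivAt_mobius _ (by simpa)).deriv,
    (hasDerivAt_mobius _ (by simpa)).deriv] at hder
  obtain ⟨a, c, hc, hM'⟩ := exists_smul_mul_rhoMatrix (norm_ne_zero_iff.1 (by simp [hζ])) hdet
    hCD hCD' (by rw [← hφ, ← hψ, hφζ, hψζ]) (by simpa using hder)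
  have hcomp : ∀ z, (2 + a) * ζ - a * z ≠ 0 → ψ z = φ (rho ζ a z) := fun z hz => by
    rw [hψM, hφM, hM', mobius_smul _ hc,
      mobius_mul _ _ (by simpa [rhoMatrix, sub_eq_neg_add] using hz), mobius_rhoMatrix]
  have hinj : InjOn φ (closedBall 0 1) := hφM ▸ (injOn_mobius _ (by simpa)).mono
    fun z hz => by simpa using hden z (mem_closedBall_zero_iff.1 hz)
  have hre : 0 < a.re := (re_nonneg_of_eq_comp_rho hζ hinj hcomp hsub.1).lt_of_ne
    fun h => hsub.2 (image_ball_subset_of_eq_comp_rho hζ h.symm hcomp)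
  exact ⟨a, hre, fun z hz => hcomp z (rho_den_ne_zero_and_norm_lt_one hζ hre.le
    (mem_ball_zero_iff.1 hz)).1⟩

theorem stmt_4 (A B C D A' B' C' D' : ℂ)
    (hdet : A * D - B * C ≠ 0) (hdet' : A' * D' - B' * C' ≠ 0)
    (φ ψ : ℂ → ℂ)
    (hφ : ∀ z, φ z = (A * z + B) / (C * z + D))
    (hψ : ∀ z, ψ z = (A' * z + B') / (C' * z + D'))
    (hden : ∀ z : ℂ, ‖z‖ ≤ 1 → C * z + D ≠ 0)
    (hden' : ∀ z : ℂ, ‖z‖ ≤ 1 → C' * z + D' ≠ 0)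
    (hmaps : ∀ z : ℂ, ‖z‖ < 1 → ‖φ z‖ < 1)
    (hnotonto : φ '' Metric.ball 0 1 ≠ Metric.ball 0 1)
    (hmaps' : ∀ z : ℂ, ‖z‖ < 1 → ‖ψ z‖ < 1)
    (ζ η : ℂ) (hζ : ‖ζ‖ = 1) (hη : ‖η‖ = 1) (hne : ζ ≠ η)
    (hφζ : φ ζ = η) (hψζ : ψ ζ = η) (hder : deriv ψ ζ = deriv φ ζ)
    (hsub : ψ '' Metric.ball 0 1 ⊂ φ '' Metric.ball 0 1) :
    ∃ a : ℂ, 0 < a.re ∧ ∀ z ∈ Metric.ball (0 : ℂ) 1, ψ z = φ (rho ζ a z) :=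
  stmt_4_general A B C D A' B' C' D' hdet φ ψ hφ hψ hden hden' ζ η hζ hφζ hψζ hder hsub
end

section
/- Let γ ∈ ℂ with |γ| = 1 and let a ∈ ℂ with Re a ≥ 0. Then the denominator (2+a)γ − a·z of ρ_{γ,a} does not vanish for any z ∈ 𝔻, and the image ρ_{γ,a}(𝔻) equals the open disk {w ∈ ℂ : |w − (1−r)γ| < r}, where r = 1/(1 + Re a). In particular ρ_{γ,a} maps 𝔻 into 𝔻, and ρ_{γ,a}(𝔻) = 𝔻 if and only if Re a = 0. -/
open Complex Metric

noncomputable def cayley (γ z : ℂ) : ℂ := (γ + z) / (γ - z)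

noncomputable def cayleyInv (γ ζ : ℂ) : ℂ := γ * (ζ - 1) / (ζ + 1)

/-- The disk of radius `(1 + s)⁻¹` internally tangent to the unit circle at `γ`; the Cayley map
sends it onto the half-plane `s < re`. -/
def horodisk (γ : ℂ) (s : ℝ) : Set ℂ := ball (((1 - (1 + s)⁻¹ : ℝ) : ℂ) * γ) (1 + s)⁻¹

section Cayley

variable {γ : ℂ}

theorem ne_neg_one_of_neg_one_lt_re {ζ : ℂ} (h : -1 < ζ.re) : ζ ≠ -1 := by
  rintro rfl
  simp at h

theorem cayley_cayleyInv (hγ : γ ≠ 0) {ζ : ℂ} (hζ : ζ ≠ -1) : cayley γ (cayleyInv γ ζ) = ζ := by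
  have hζ' : ζ + 1 ≠ 0 := by rwa [Ne, add_eq_zero_iff_eq_neg]
  rw [cayley, cayleyInv]
  field_simp
  ring

theorem cayleyInv_cayley (hγ : γ ≠ 0) {z : ℂ} (hz : z ≠ γ) : cayleyInv γ (cayley γ z) = z := by
  have hz' : γ - z ≠ 0 := sub_ne_zero.mpr hz.symm
  rw [cayley, cayleyInv, div_add_one hz', div_sub_one hz', mul_div_assoc,
    div_div_div_cancel_right₀ hz', show γ + z + (γ - z) = 2 * γ by ring,
    show γ + z - (γ - z) = 2 * z by ring]
  field_simp

theorem cayleyInv_ne (hγ : γ ≠ 0) (ζ : ℂ) : cayleyInv γ ζ ≠ γ := by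
  rcases eq_or_ne (ζ + 1) 0 with hζ | hζ
  · simpa [cayleyInv, hζ] using hγ.symm
  · rw [cayleyInv, Ne, div_eq_iff hζ]
    intro h
    have : γ * 2 = 0 := by linear_combination -h
    simp_all

theorem re_cayley (hγ : ‖γ‖ = 1) (z : ℂ) : (cayley γ z).re = (1 - ‖z‖ ^ 2) / ‖γ - z‖ ^ 2 := by
  have hγ' : γ.re * γ.re + γ.im * γ.im = 1 := by
    rw [← normSq_apply, ← Complex.sq_norm, hγ, one_pow]
  rw [cayley, div_re, ← add_div, Complex.sq_norm, Complex.sq_norm, normSq_apply z]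
  congr 1
  simp only [add_re, sub_re, add_im, sub_im]
  linear_combination hγ'

theorem mem_horodisk_iff (hγ : ‖γ‖ = 1) {s : ℝ} (hs : -1 < s) (w : ℂ) :
    w ∈ horodisk γ s ↔ w ≠ γ ∧ s < (cayley γ w).re := by
  have hs' : 0 < 1 + s := by linarith
  have hγ' : γ.re * γ.re + γ.im * γ.im = 1 := by
    rw [← normSq_apply, ← Complex.sq_norm, hγ, one_pow]
  have hscaled : (1 + s) * (‖w - ((1 - (1 + s)⁻¹ : ℝ) : ℂ) * γ‖ ^ 2 - ((1 + s)⁻¹) ^ 2)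
      = s * ‖γ - w‖ ^ 2 - (1 - ‖w‖ ^ 2) := by
    simp only [Complex.sq_norm, normSq_apply, sub_re, sub_im, mul_re, mul_im, ofReal_re, ofReal_im]
    field_simp
    linear_combination (-s) * hγ'
  rw [horodisk, mem_ball, dist_eq,
    ← pow_lt_pow_iff_left₀ (norm_nonneg _) (inv_pos.2 hs').le two_ne_zero, ← sub_neg,
    ← mul_lt_mul_iff_right₀ hs', mul_zero, hscaled, sub_neg, re_cayley hγ]
  rcases eq_or_ne w γ with rfl | hw
  · simp [hγ]
  · rw [lt_div_iff₀ (pow_pos (norm_pos_iff.2 (sub_ne_zero.2 hw.symm)) 2)]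
    exact ⟨fun h => ⟨hw, h⟩, And.right⟩

theorem horodisk_zero (γ : ℂ) : horodisk γ 0 = ball 0 1 := by
  simp [horodisk]

theorem horodisk_inj (hγ : ‖γ‖ = 1) {s t : ℝ} (hs : -1 < s) (ht : -1 < t) :
    horodisk γ s = horodisk γ t ↔ s = t := by
  refine ⟨fun h => ?_, congrArg _⟩
  have hγ0 : γ ≠ 0 := by rintro rfl; simp at hγ
  set ζ : ℂ := (((s + t) / 2 : ℝ) : ℂ)
  have hζ : ζ ≠ -1 := ne_neg_one_of_neg_one_lt_re (by rw [ofReal_re]; linarith)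
  have hmem := Set.ext_iff.1 h (cayleyInv γ ζ)
  simp only [mem_horodisk_iff hγ hs, mem_horodisk_iff hγ ht, cayley_cayleyInv hγ0 hζ,
    cayleyInv_ne hγ0, ne_eq, not_false_eq_true, true_and, ζ, ofReal_re] at hmem
  rcases lt_trichotomy s t with hst | hst | hst
  · linarith [hmem.1 (by linarith)]
  · exact hst
  · linarith [hmem.2 (by linarith)]

theorem horodisk_subset_ball (hγ : ‖γ‖ = 1) {s : ℝ} (hs : 0 ≤ s) : horodisk γ s ⊆ ball 0 1 := by
  intro w hw
  rw [← horodisk_zero, mem_horodisk_iff hγ (by norm_num)]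
  rw [mem_horodisk_iff hγ (by linarith)] at hw
  exact ⟨hw.1, hs.trans_lt hw.2⟩

end Cayley

section Rho

variable {γ a z : ℂ}

theorem cayley_add_add_one (hz : z ≠ γ) :
    cayley γ z + a + 1 = ((2 + a) * γ - a * z) / (γ - z) := by
  rw [cayley, eq_div_iff (sub_ne_zero.2 hz.symm)]
  field_simp
  ring

theorem rho_eq_cayleyInv (hz : z ≠ γ) : rho γ a z = cayleyInv γ (cayley γ z + a) := by
  have hnum : cayley γ z + a - 1 = ((2 - a) * z + a * γ) / (γ - z) := by
    rw [cayley, eq_div_iff (sub_ne_zero.2 hz.symm)]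
    field_simp
    ring
  rw [rho, cayleyInv, hnum, cayley_add_add_one hz, mul_div_assoc, mul_div_assoc,
    div_div_div_cancel_right₀ (sub_ne_zero.2 hz.symm)]

theorem rho_denom_ne_zero (hγ : ‖γ‖ = 1) (ha : -1 < a.re) (hz : z ∈ ball 0 1) :
    (2 + a) * γ - a * z ≠ 0 := by
  rw [← horodisk_zero, mem_horodisk_iff hγ (by norm_num)] at hz
  have hre : 0 < (cayley γ z + a + 1).re := by rw [add_re, add_re, one_re]; linarith [hz.2]
  rw [cayley_add_add_one hz.1] at hre
  intro h
  simp [h] at hre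

theorem image_rho_ball (hγ : ‖γ‖ = 1) (ha : -1 < a.re) :
    rho γ a '' ball 0 1 = horodisk γ a.re := by
  have hγ0 : γ ≠ 0 := by rintro rfl; simp at hγ
  have mem_ball_one := mem_horodisk_iff hγ (s := 0) (by norm_num)
  rw [horodisk_zero] at mem_ball_one
  ext w
  constructor
  · rintro ⟨z, hz, rfl⟩
    obtain ⟨hzγ, hre⟩ := (mem_ball_one z).1 hz
    have hζ : cayley γ z + a ≠ -1 := ne_neg_one_of_neg_one_lt_re (by rw [add_re]; linarith)
    rw [rho_eq_cayleyInv hzγ, mem_horodisk_iff hγ ha, cayley_cayleyInv hγ0 hζ]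
    exact ⟨cayleyInv_ne hγ0 _, by simpa using hre⟩
  · intro hw
    obtain ⟨hwγ, hre⟩ := (mem_horodisk_iff hγ ha w).1 hw
    have hζ : cayley γ w - a ≠ -1 := ne_neg_one_of_neg_one_lt_re (by rw [sub_re]; linarith)
    refine ⟨cayleyInv γ (cayley γ w - a), (mem_ball_one _).2 ⟨cayleyInv_ne hγ0 _, ?_⟩, ?_⟩
    · simpa [cayley_cayleyInv hγ0 hζ] using hre
    · rw [rho_eq_cayleyInv (cayleyInv_ne hγ0 _), cayley_cayleyInv hγ0 hζ, sub_add_cancel,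
        cayleyInv_cayley hγ0 hwγ]

end Rho

theorem stmt_7 (γ a : ℂ) (hγ : ‖γ‖ = 1) (ha : 0 ≤ a.re) :
    (∀ z ∈ Metric.ball (0 : ℂ) 1, (2 + a) * γ - a * z ≠ 0) ∧
    (fun z => rho γ a z) '' Metric.ball 0 1 =
      Metric.ball (((1 - (1 + a.re)⁻¹ : ℝ) : ℂ) * γ) ((1 + a.re)⁻¹) ∧
    (∀ z ∈ Metric.ball (0 : ℂ) 1, rho γ a z ∈ Metric.ball (0 : ℂ) 1) ∧
    ((fun z => rho γ a z) '' Metric.ball 0 1 = Metric.ball (0 : ℂ) 1 ↔ a.re = 0) := by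
  have ha' : -1 < a.re := by linarith
  have himage : rho γ a '' ball 0 1 = horodisk γ a.re := image_rho_ball hγ ha'
  refine ⟨fun z hz => rho_denom_ne_zero hγ ha' hz, himage, fun z hz => ?_, ?_⟩
  · exact horodisk_subset_ball hγ ha (himage ▸ Set.mem_image_of_mem _ hz)
  · rw [himage, ← horodisk_zero γ, horodisk_inj hγ ha' (by norm_num)]
end
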